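/- arXiv:1509.04199 — 3 statements merged into one kernel-verified Lean document; each statement's English description precedes it below -/
import Mathlib

section
/- Let t ≥ 4. In the game i-Mark([1,t−1],{2}), writing n = qt + r with 0 ≤ r ≤ t−1: (i) if (q < 2 and r = 0) or (q ≥ 2 and r = 1) then g(n) = 0; (ii) if q < 2 and r ≠ 0 then g(n) = r; (iii) if q ≥ 2 and r = 2 then g(n) = 2; (iv) if q ≥ 2 and r = 3 then g(n) = 1; (v) if q ≥ 2 and r > 3 then g(n) = r − 1; (vi) if q ≥ 2 and r = 0 then g(n) ∈ {t−1, t}. -/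
/-- The minimum excludant of a finite set of naturals. -/
noncomputable def mex (s : Finset ℕ) : ℕ := sInf {k : ℕ | k ∉ s}

/-- Options of the game i-Mark(S,D) from a heap of `n` tokens:
move to `n - s` for `s ∈ S` (with `1 ≤ s ≤ n`), or to `n / d` for `d ∈ D`
(with `2 ≤ d` and `d ∣ n`, `n ≥ 1`). -/
def iMarkOptions (S D : Finset ℕ) (n : ℕ) : Finset ℕ :=
  ((S.filter (fun s => 1 ≤ s ∧ s ≤ n)).image (fun s => n - s)) ∪
  ((D.filter (fun d => 2 ≤ d ∧ d ∣ n ∧ 1 ≤ n)).image (fun d => n / d))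

theorem iMarkOptions_lt {S D : Finset ℕ} {n m : ℕ} (h : m ∈ iMarkOptions S D n) : m < n := by
  simp only [iMarkOptions, Finset.mem_union, Finset.mem_image, Finset.mem_filter] at h
  rcases h with ⟨s, ⟨_, h1, h2⟩, rfl⟩ | ⟨d, ⟨_, h2, hd, hn⟩, rfl⟩
  · omega
  · exact Nat.div_lt_self hn h2

/-- The Sprague-Grundy value of a heap of `n` tokens in the game i-Mark(S,D). -/
noncomputable def grundy (S D : Finset ℕ) (n : ℕ) : ℕ :=
  mex ((iMarkOptions S D n).attach.image (fun m => grundy S D m.1))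
termination_by n
decreasing_by exact iMarkOptions_lt m.2

/-- `misereP S D n` means `n` is a P-position of i-Mark(S,D) under misère convention:
`n` has at least one option and every option is an N-position. -/
def misereP (S D : Finset ℕ) (n : ℕ) : Prop :=
  (iMarkOptions S D n).Nonempty ∧
    ∀ m : {x // x ∈ iMarkOptions S D n}, ¬ misereP S D m.1
termination_by n
decreasing_by exact iMarkOptions_lt m.2

/-!
Below `2t` the halving move never supplies a missing value, so `g n = n mod t`, as in the plain
subtraction game. For `n = q t + r` with `q ≥ 2`, the subtraction moves reach the residues below
`r` in block `q` and those above `r` in block `q - 1`. Inductively, a nonzero residue `ρ` in a block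
`≥ 2` has the value `φ ρ`, where `φ` (`tailValue`) maps `1, 2, 3, 4, …, t - 1` injectively to
`0, 2, 1, 3, …, t - 2`, and residue `0` has a value `≥ t - 1`; in block `1` the residue `ρ > r`
has the value `ρ > φ r`. The halving move cannot hit `φ r` either: `n / 2` lies in an earlier
block, and a number and its double share a residue only when it is `0`. Hence `g n = φ r`, the
only value the subtraction moves miss being `1` at `n = 2t + 2`, where the halving move to
`t + 1` supplies it. At residue `0` the moves reach `0, …, t - 2`, and there are at most `t`
options, so `g n ∈ {t - 1, t}`.
-/

theorem mex_notMem (s : Finset ℕ) : mex s ∉ s :=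
  Nat.sInf_mem s.exists_notMem

theorem mem_of_lt_mex {s : Finset ℕ} {a : ℕ} (h : a < mex s) : a ∈ s := by
  by_contra ha
  exact (Nat.sInf_le ha).not_gt h

theorem le_mex_of_forall_lt_mem {s : Finset ℕ} {a : ℕ} (h : ∀ b < a, b ∈ s) : a ≤ mex s :=
  not_lt.1 fun ha => mex_notMem s (h _ ha)

theorem mex_eq_iff {s : Finset ℕ} {a : ℕ} : mex s = a ↔ a ∉ s ∧ ∀ b < a, b ∈ s :=
  ⟨by rintro rfl; exact ⟨mex_notMem s, fun b => mem_of_lt_mex⟩,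
    fun h => le_antisymm (Nat.sInf_le h.1) (le_mex_of_forall_lt_mem h.2)⟩

theorem mex_le_card (s : Finset ℕ) : mex s ≤ s.card := by
  simpa using Finset.card_le_card fun b hb => mem_of_lt_mex (Finset.mem_range.1 hb)

section Grundy

variable {S D : Finset ℕ} {n a : ℕ}

theorem grundy_eq_iff : grundy S D n = a ↔
    (∀ m ∈ iMarkOptions S D n, grundy S D m ≠ a) ∧
      ∀ b < a, ∃ m ∈ iMarkOptions S D n, grundy S D m = b := by
  rw [grundy, mex_eq_iff]
  simp

theorem le_grundy_of_forall_lt (h : ∀ b < a, ∃ m ∈ iMarkOptions S D n, grundy S D m = b) :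
    a ≤ grundy S D n := by
  rw [grundy]
  exact le_mex_of_forall_lt_mem fun b hb => by simpa using h b hb

theorem card_iMarkOptions_le : (iMarkOptions S D n).card ≤ S.card + D.card :=
  (Finset.card_union_le _ _).trans <| add_le_add
    (Finset.card_image_le.trans (Finset.card_filter_le _ _))
    (Finset.card_image_le.trans (Finset.card_filter_le _ _))

theorem grundy_le_card_add_card : grundy S D n ≤ S.card + D.card := by
  rw [grundy]
  exact (mex_le_card _).trans <| Finset.card_image_le.trans <|
    (Finset.card_attach).trans_le card_iMarkOptions_le

end Grundy

local notation:max "𝒢" t:max => grundy (Finset.Icc 1 (t - 1)) {2}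

section FirstTwoBlocks

variable {t n m : ℕ}

theorem mem_iMarkOptions_Icc_two :
    m ∈ iMarkOptions (Finset.Icc 1 (t - 1)) {2} n ↔
      (m < n ∧ n < m + t) ∨ (n ≠ 0 ∧ n = 2 * m) := by
  simp only [iMarkOptions, Finset.mem_union, Finset.mem_image, Finset.mem_filter,
    Finset.mem_Icc, Finset.mem_singleton]
  constructor
  · rintro (⟨s, ⟨⟨hs1, hst⟩, -, hsn⟩, rfl⟩ | ⟨d, ⟨rfl, -, ⟨k, rfl⟩, hn⟩, rfl⟩)
    · omega
    · omega
  · rintro (⟨hmn, hnm⟩ | ⟨hn, rfl⟩)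
    · exact Or.inl ⟨n - m, ⟨⟨by omega, by omega⟩, by omega, by omega⟩, by omega⟩
    · exact Or.inr ⟨2, ⟨rfl, le_rfl, dvd_mul_right 2 m, by omega⟩, by omega⟩

theorem grundy_eq_self_of_lt (hn : n < t) : 𝒢 t n = n := by
  induction n using Nat.strong_induction_on with
  | _ n ih =>
  rw [grundy_eq_iff]
  refine ⟨fun m hm => ?_, fun b hb => ⟨b, mem_iMarkOptions_Icc_two.2 (Or.inl ⟨hb, by omega⟩),
    ih b hb (by omega)⟩⟩
  have hmn := iMarkOptions_lt hm
  rw [ih m hmn (by omega)]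
  exact hmn.ne

theorem grundy_eq_sub_of_lt_two_mul (htn : t ≤ n) (hn : n < 2 * t) : 𝒢 t n = n - t := by
  induction n using Nat.strong_induction_on with
  | _ n ih =>
  rw [grundy_eq_iff]
  refine ⟨fun m hm => ?_, fun b hb =>
    ⟨t + b, mem_iMarkOptions_Icc_two.2 (Or.inl ⟨by omega, by omega⟩),
      by rw [ih (t + b) (by omega) (by omega) (by omega)]; omega⟩⟩
  by_cases hmt : m < t
  · rw [grundy_eq_self_of_lt hmt]
    rcases mem_iMarkOptions_Icc_two.1 hm with ⟨-, hnm⟩ | ⟨-, rfl⟩ <;> omega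
  · have hmn := iMarkOptions_lt hm
    rw [ih m hmn (by omega) (by omega)]
    omega

end FirstTwoBlocks

/-- `tailValue 0` is junk: residue `0` is handled separately. -/
def tailValue : ℕ → ℕ
  | 2 => 2
  | 3 => 1
  | r => r - 1

theorem tailValue_cases (r : ℕ) :
    (r = 2 ∧ tailValue r = 2) ∨ (r = 3 ∧ tailValue r = 1) ∨
      (r ≠ 2 ∧ r ≠ 3 ∧ tailValue r = r - 1) := by
  match r with
  | 2 => simp [tailValue]
  | 3 => simp [tailValue]
  | 0 | 1 => simp [tailValue]
  | r + 4 => simp [tailValue]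

theorem tailValue_le_self (r : ℕ) : tailValue r ≤ r := by
  rcases tailValue_cases r with h | h | h <;> omega

theorem tailValue_add_two_le {t r : ℕ} (ht : 4 ≤ t) (hr : r < t) : tailValue r + 2 ≤ t := by
  rcases tailValue_cases r with h | h | h <;> omega

theorem two_mul_tailValue_ne {r : ℕ} (hr : r ≠ 0) : 2 * tailValue r ≠ r := by
  rcases tailValue_cases r with h | h | h <;> omega

theorem eq_of_tailValue_eq {ρ r : ℕ} (hρ : ρ ≠ 0) (hr : r ≠ 0) (h : tailValue ρ = tailValue r) :
    ρ = r := by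
  rcases tailValue_cases ρ with h₁ | h₁ | h₁ <;> rcases tailValue_cases r with h₂ | h₂ | h₂ <;> omega

theorem lt_of_tailValue_lt {ρ r : ℕ} (h : tailValue ρ < tailValue r) :
    ρ < r ∨ (ρ = 3 ∧ r = 2) := by
  rcases tailValue_cases ρ with h₁ | h₁ | h₁ <;> rcases tailValue_cases r with h₂ | h₂ | h₂ <;> omega

theorem exists_tailValue_eq {t b : ℕ} (ht : 4 ≤ t) (hb : b + 2 ≤ t) :
    ∃ ρ, ρ ≠ 0 ∧ ρ < t ∧ tailValue ρ = b := by
  rcases (by omega : b = 1 ∨ b = 2 ∨ (b ≠ 1 ∧ b ≠ 2)) with rfl | rfl | ⟨h1, h2⟩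
  · exact ⟨3, by omega, by omega, rfl⟩
  · exact ⟨2, by omega, by omega, rfl⟩
  · refine ⟨b + 1, by omega, by omega, ?_⟩
    rcases tailValue_cases (b + 1) with h | h | h <;> omega

def TailFormulaBelow (t n : ℕ) : Prop :=
  ∀ a b, 2 ≤ a → b < t → a * t + b < n →
    (b = 0 → t - 1 ≤ 𝒢 t (a * t + b)) ∧ (b ≠ 0 → 𝒢 t (a * t + b) = tailValue b)

section Tail

variable {t q r m : ℕ}

theorem sub_one_mul_add_self (t : ℕ) (hq : 1 ≤ q) : (q - 1) * t + t = q * t := by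
  rw [← add_one_mul, Nat.sub_add_cancel hq]

theorem sub_one_le_grundy_mul (ht : 4 ≤ t) (hq : 2 ≤ q) (ih : TailFormulaBelow t (q * t)) :
    t - 1 ≤ 𝒢 t (q * t) := by
  have hpred := sub_one_mul_add_self t (by omega : 1 ≤ q)
  refine le_grundy_of_forall_lt fun b hb => ?_
  obtain rfl | hq3 := (by omega : q = 2 ∨ 3 ≤ q)
  · obtain rfl | hb0 := Nat.eq_zero_or_pos b
    · exact ⟨t, mem_iMarkOptions_Icc_two.2 (Or.inr ⟨by omega, by ring⟩),
        by rw [grundy_eq_sub_of_lt_two_mul le_rfl (by omega), Nat.sub_self]⟩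
    · exact ⟨t + b, mem_iMarkOptions_Icc_two.2 (Or.inl ⟨by omega, by omega⟩),
        by rw [grundy_eq_sub_of_lt_two_mul (by omega) (by omega)]; omega⟩
  · obtain ⟨ρ, hρ0, hρ, rfl⟩ := exists_tailValue_eq ht (show b + 2 ≤ t by omega)
    exact ⟨(q - 1) * t + ρ, mem_iMarkOptions_Icc_two.2 (Or.inl ⟨by omega, by omega⟩),
      (ih (q - 1) ρ (by omega) hρ (by omega)).2 hρ0⟩

theorem eq_zero_of_two_mul_eq {a : ℕ} (hr : r < t) (h : q * t + r = 2 * (a * t + r)) :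
    r = 0 := by
  have hq : q * t = 2 * a * t + r := by linarith
  exact Nat.eq_zero_of_dvd_of_lt ((Nat.dvd_add_right (dvd_mul_left t (2 * a))).1
    (hq ▸ dvd_mul_left t q)) hr

theorem grundy_half_ne_tailValue (ht : 4 ≤ t) (hq : 2 ≤ q) (hr0 : r ≠ 0) (hr : r < t)
    (ih : TailFormulaBelow t (q * t + r)) (hm : q * t + r = 2 * m) : 𝒢 t m ≠ tailValue r := by
  have h2t : 2 * t ≤ q * t := Nat.mul_le_mul_right t hq
  have hφ := tailValue_add_two_le ht hr
  by_cases hm2 : m < 2 * t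
  · rw [grundy_eq_sub_of_lt_two_mul (by omega) hm2]
    -- `m` is in block `1`, so `n` is in block `2` or `3`
    have hq4 : q < 4 := Nat.lt_of_mul_lt_mul_right (a := t) (by omega)
    obtain rfl | rfl := (by omega : q = 2 ∨ q = 3)
    · have := two_mul_tailValue_ne hr0
      omega
    · have := tailValue_le_self r
      omega
  · have hdiv : m / t * t + m % t = m := Nat.div_add_mod' m t
    have ha : 2 ≤ m / t := (Nat.le_div_iff_mul_le (by omega)).2 (by omega)
    have hb : m % t < t := Nat.mod_lt m (by omega)
    have hval := ih (m / t) (m % t) ha hb (by omega)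
    rw [hdiv] at hval
    obtain hb0 | hb0 := eq_or_ne (m % t) 0
    · have := hval.1 hb0
      omega
    · rw [hval.2 hb0]
      intro h
      have hbr := eq_of_tailValue_eq hb0 hr0 h
      rw [hbr] at hdiv
      exact hr0 (eq_zero_of_two_mul_eq (q := q) (a := m / t) hr (by rw [hdiv]; exact hm))

theorem grundy_sub_ne_tailValue (ht : 4 ≤ t) (hq : 2 ≤ q) (hr0 : r ≠ 0) (hr : r < t)
    (ih : TailFormulaBelow t (q * t + r)) (hmn : m < q * t + r) (hnm : q * t + r < m + t) :
    𝒢 t m ≠ tailValue r := by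
  have hpred := sub_one_mul_add_self t (by omega : 1 ≤ q)
  have hφ := tailValue_add_two_le ht hr
  by_cases hm : q * t ≤ m
  · obtain ⟨ρ, rfl⟩ : ∃ ρ, m = q * t + ρ := ⟨m - q * t, by omega⟩
    obtain rfl | hρ0 := eq_or_ne ρ 0
    · have := (ih q 0 hq (by omega) (by omega)).1 rfl
      omega
    · rw [(ih q ρ hq (by omega) (by omega)).2 hρ0]
      intro h
      have := eq_of_tailValue_eq hρ0 hr0 h
      omega
  · obtain ⟨ρ, rfl⟩ : ∃ ρ, m = (q - 1) * t + ρ := ⟨m + t - q * t, by omega⟩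
    obtain rfl | hq3 := (by omega : q = 2 ∨ 3 ≤ q)
    · rw [grundy_eq_sub_of_lt_two_mul (by omega) (by omega)]
      have := tailValue_le_self r
      omega
    · have hρ0 : ρ ≠ 0 := by omega
      rw [(ih (q - 1) ρ (by omega) (by omega) (by omega)).2 hρ0]
      intro h
      have := eq_of_tailValue_eq hρ0 hr0 h
      omega

theorem exists_option_grundy_eq_of_lt_tailValue {b : ℕ} (ht : 4 ≤ t) (hq : 2 ≤ q) (hr : r < t)
    (ih : TailFormulaBelow t (q * t + r)) (hb : b < tailValue r) :
    ∃ m ∈ iMarkOptions (Finset.Icc 1 (t - 1)) {2} (q * t + r), 𝒢 t m = b := by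
  have hpred := sub_one_mul_add_self t (by omega : 1 ≤ q)
  have hφ := tailValue_add_two_le ht hr
  obtain ⟨ρ, hρ0, hρ, rfl⟩ := exists_tailValue_eq ht (show b + 2 ≤ t by omega)
  rcases lt_or_gt_of_ne fun h : ρ = r => hb.ne (congrArg tailValue h) with hlt | hgt
  · exact ⟨q * t + ρ, mem_iMarkOptions_Icc_two.2 (Or.inl ⟨by omega, by omega⟩),
      (ih q ρ hq hρ (by omega)).2 hρ0⟩
  obtain rfl | hq3 := (by omega : q = 2 ∨ 3 ≤ q)
  · obtain ⟨rfl, rfl⟩ := (lt_of_tailValue_lt hb).resolve_left (by omega)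
    exact ⟨t + 1, mem_iMarkOptions_Icc_two.2 (Or.inr ⟨by omega, by ring⟩),
      by rw [grundy_eq_sub_of_lt_two_mul (by omega) (by omega)]; simp [tailValue]⟩
  · exact ⟨(q - 1) * t + ρ, mem_iMarkOptions_Icc_two.2 (Or.inl ⟨by omega, by omega⟩),
      (ih (q - 1) ρ (by omega) hρ (by omega)).2 hρ0⟩

theorem grundy_eq_tailValue (ht : 4 ≤ t) (hq : 2 ≤ q) (hr0 : r ≠ 0) (hr : r < t)
    (ih : TailFormulaBelow t (q * t + r)) : 𝒢 t (q * t + r) = tailValue r := by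
  rw [grundy_eq_iff]
  refine ⟨fun m hm => ?_, fun b hb => exists_option_grundy_eq_of_lt_tailValue ht hq hr ih hb⟩
  rcases mem_iMarkOptions_Icc_two.1 hm with ⟨hmn, hnm⟩ | ⟨-, hm2⟩
  · exact grundy_sub_ne_tailValue ht hq hr0 hr ih hmn hnm
  · exact grundy_half_ne_tailValue ht hq hr0 hr ih hm2

theorem tailFormulaBelow (ht : 4 ≤ t) (n : ℕ) : TailFormulaBelow t n := by
  induction n with
  | zero => exact fun _ _ _ _ h => absurd h (Nat.not_lt_zero _)
  | succ n ih =>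
    intro a b ha hb hlt
    obtain hlt | rfl := Nat.lt_succ_iff_lt_or_eq.1 hlt
    · exact ih a b ha hb hlt
    · refine ⟨?_, fun hb0 => grundy_eq_tailValue ht ha hb0 hb ih⟩
      rintro rfl
      simpa using sub_one_le_grundy_mul ht ha (by simpa using ih)

end Tail

/-- Sprague-Grundy values of i-Mark([1,t-1],{2}) for t ≥ 4. -/
theorem iMark_t_2_grundy (t : ℕ) (ht : 4 ≤ t) (n q r : ℕ) (hn : n = q * t + r) (hr : r < t) :
    (((q < 2 ∧ r = 0) ∨ (2 ≤ q ∧ r = 1)) → grundy (Finset.Icc 1 (t - 1)) {2} n = 0) ∧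
    ((q < 2 ∧ r ≠ 0) → grundy (Finset.Icc 1 (t - 1)) {2} n = r) ∧
    ((2 ≤ q ∧ r = 2) → grundy (Finset.Icc 1 (t - 1)) {2} n = 2) ∧
    ((2 ≤ q ∧ r = 3) → grundy (Finset.Icc 1 (t - 1)) {2} n = 1) ∧
    ((2 ≤ q ∧ 3 < r) → grundy (Finset.Icc 1 (t - 1)) {2} n = r - 1) ∧
    ((2 ≤ q ∧ r = 0) →
      grundy (Finset.Icc 1 (t - 1)) {2} n = t - 1 ∨ grundy (Finset.Icc 1 (t - 1)) {2} n = t) := by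
  subst hn
  have low (hq : q < 2) : 𝒢 t (q * t + r) = r := by
    obtain rfl | rfl := (by omega : q = 0 ∨ q = 1)
    · simpa using grundy_eq_self_of_lt hr
    · simpa using grundy_eq_sub_of_lt_two_mul (t := t) (n := t + r) (by omega) (by omega)
  have tail (hq : 2 ≤ q) := tailFormulaBelow ht (q * t + r + 1) q r hq hr (lt_add_one _)
  have hφ := tailValue_cases r
  refine ⟨?_, fun h => low h.1, fun h => ?_, fun h => ?_, fun h => ?_, fun h => ?_⟩
  · rintro (⟨hq, rfl⟩ | ⟨hq, rfl⟩)
    · exact low hq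
    · exact (tail hq).2 one_ne_zero
  · rw [(tail h.1).2 (by omega)]; omega
  · rw [(tail h.1).2 (by omega)]; omega
  · rw [(tail h.1).2 (by omega)]; omega
  · have hle : 𝒢 t (q * t + r) ≤ t - 1 + 1 := by
      simpa using grundy_le_card_add_card (S := Finset.Icc 1 (t - 1)) (D := {2})
    have := (tail h.1).1 h.2
    omega
end

section
/- Let a ≥ 2 be even. In the game i-Mark({a,2a},{2}), for every odd n, writing n = 3qa + r with 0 ≤ r ≤ 3a−1 (r odd since a is even): if r < a then g(n) = 0; if a < r < 2a then g(n) = 1; and if r > 2a then g(n) = 2. Hence the odd subsequence of the Sprague-Grundy sequence is purely periodic with period 3a. -/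
/-! For odd `n` there is no halving move, and since `a` is even both subtraction moves lead to
odd heaps again. On odd heaps the game is therefore the subtraction game with moves `{a, 2a}`,
whose Grundy value is `⌊n / a⌋ mod 3`: a heap in block `k ≥ 2` has its two options in the
blocks `k - 1` and `k - 2`, whose values are the other two residues mod 3. -/

lemma mex_eq_of_forall_lt_mem {s : Finset ℕ} {n : ℕ} (hn : n ∉ s) (hlt : ∀ k < n, k ∈ s) :
    mex s = n :=
  IsLeast.csInf_eq ⟨hn, fun k hk => not_lt.mp fun hkn => hk (hlt k hkn)⟩

lemma mex_empty : mex ∅ = 0 :=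
  mex_eq_of_forall_lt_mem (Finset.notMem_empty 0) (by simp)

lemma mex_singleton_zero : mex {0} = 1 :=
  mex_eq_of_forall_lt_mem (by simp) (by simp)

lemma mex_pair_mod_three (k : ℕ) : mex {(k + 1) % 3, k % 3} = (k + 2) % 3 :=
  mex_eq_of_forall_lt_mem (by simp only [Finset.mem_insert, Finset.mem_singleton, not_or]; omega)
    (fun j hj => by simp only [Finset.mem_insert, Finset.mem_singleton]; omega)

lemma grundy_eq_mex (S D : Finset ℕ) (n : ℕ) :
    grundy S D n = mex ((iMarkOptions S D n).image (grundy S D)) := by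
  rw [grundy]
  congr 1
  ext
  simp

lemma iMarkOptions_of_forall_not_dvd {S D : Finset ℕ} {n : ℕ} (h : ∀ d ∈ D, ¬ d ∣ n) :
    iMarkOptions S D n = (S.filter fun s => 1 ≤ s ∧ s ≤ n).image (n - ·) := by
  rw [iMarkOptions, Finset.filter_false_of_mem (s := D) fun d hd hdn => h d hd hdn.2.1,
    Finset.image_empty, Finset.union_empty]

lemma grundy_odd_eq_mex_sub {a : ℕ} (ha : 0 < a) {n : ℕ} (hn : Odd n) :
    grundy {a, 2 * a} {2} n =
      mex ((({a, 2 * a} : Finset ℕ).filter (· ≤ n)).image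
        fun s => grundy {a, 2 * a} {2} (n - s)) := by
  have hn2 : ¬ 2 ∣ n := Nat.not_even_iff_odd.mpr hn ∘ even_iff_two_dvd.mpr
  rw [grundy_eq_mex, iMarkOptions_of_forall_not_dvd (by simpa using hn2), Finset.image_image]
  congr 2
  ext s
  simp only [Finset.mem_filter, Finset.mem_insert, Finset.mem_singleton]
  omega

theorem grundy_odd_eq_div_mod_three {a : ℕ} (hae : Even a) (ha : 0 < a) {n : ℕ} (hn : Odd n) :
    grundy {a, 2 * a} {2} n = n / a % 3 := by
  induction n using Nat.strong_induction_on with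
  | _ n ih =>
  rw [grundy_odd_eq_mex_sub ha hn]
  rcases lt_or_ge n a with hna | hna
  · rw [Finset.filter_eq_empty_iff.mpr
        (by simp only [Finset.forall_mem_insert, Finset.mem_singleton, forall_eq]; omega),
      Finset.image_empty, mex_empty, Nat.div_eq_of_lt hna]
  have g1 : grundy {a, 2 * a} {2} (n - a) = (n - a) / a % 3 :=
    ih _ (by omega) (Nat.Odd.sub_even hna hn hae)
  rcases lt_or_ge n (2 * a) with hn2a | hn2a
  · have hopts : ({a, 2 * a} : Finset ℕ).filter (· ≤ n) = {a} := by
      ext s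
      simp only [Finset.mem_filter, Finset.mem_insert, Finset.mem_singleton]
      omega
    rw [hopts, Finset.image_singleton, g1, Nat.div_eq_of_lt (by omega : n - a < a),
      Nat.div_eq_of_lt_le (by omega : 1 * a ≤ n) (by omega), Nat.zero_mod, mex_singleton_zero]
  · have g2 : grundy {a, 2 * a} {2} (n - 2 * a) = (n - 2 * a) / a % 3 :=
      ih _ (by omega) (Nat.Odd.sub_even hn2a hn (even_two_mul a))
    have hdiv1 : (n - a) / a = (n - 2 * a) / a + 1 := by
      rw [← Nat.add_div_right _ ha]
      congr 1
      omega
    have hdiv2 : n / a = (n - a) / a + 1 := by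
      rw [← Nat.add_div_right _ ha]
      congr 1
      omega
    rw [Finset.filter_true_of_mem
        (by simp only [Finset.forall_mem_insert, Finset.mem_singleton, forall_eq]; omega),
      Finset.image_insert, Finset.image_singleton, g1, g2, hdiv2, hdiv1, mex_pair_mod_three]

lemma div_mod_three_eq_of_eq_add {a n q r : ℕ} (ha : 0 < a) (h : n = 3 * q * a + r)
    (hr : r < 3 * a) :
    n / a % 3 = r / a := by
  rw [h, show 3 * q * a + r = r + a * (3 * q) by ring, Nat.add_mul_div_left _ _ ha,
    Nat.add_mul_mod_self_left, Nat.mod_eq_of_lt (Nat.div_lt_of_lt_mul (by omega))]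

/-- The odd subsequence of the Sprague-Grundy sequence of i-Mark({a,2a},{2}), a even,
is purely periodic with period 3a. -/
theorem iMark_a_2a_odd (a : ℕ) (ha : 2 ≤ a) (hae : Even a) :
    (∀ n q r : ℕ, Odd n → n = 3 * q * a + r → r < 3 * a →
      ((r < a → grundy {a, 2 * a} {2} n = 0) ∧
       (a < r ∧ r < 2 * a → grundy {a, 2 * a} {2} n = 1) ∧
       (2 * a < r → grundy {a, 2 * a} {2} n = 2))) ∧
    (∀ n : ℕ, Odd n → grundy {a, 2 * a} {2} n = grundy {a, 2 * a} {2} (n + 3 * a)) := by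
  have ha0 : 0 < a := by omega
  refine ⟨fun n q r hn hqr hr => ?_, fun n hn => ?_⟩
  · rw [grundy_odd_eq_div_mod_three hae ha0 hn, div_mod_three_eq_of_eq_add ha0 hqr hr]
    exact ⟨Nat.div_eq_of_lt, fun _ => Nat.div_eq_of_lt_le (by omega) (by omega),
      fun _ => Nat.div_eq_of_lt_le (by omega) (by omega)⟩
  · rw [grundy_odd_eq_div_mod_three hae ha0 hn,
      grundy_odd_eq_div_mod_three hae ha0 (hn.add_even (hae.mul_left 3)),
      mul_comm 3 a, Nat.add_mul_div_left _ _ ha0, Nat.add_mod_right]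
end

section
/- Let a ≥ 1 be odd. In the misère game i-MiMark({a,2a},{2}), every position n with 0 < n < a is an N-position if and only if the 2-adic valuation of n is even; moreover 0 is an N-position. -/
/-!
Below `a` neither subtraction is legal, so the only move is halving, and the game on a heap
`n = 2^v * m` with `m` odd is a chain of `v` forced halvings ending at a position without moves.
Under the misère convention that terminal position is an N-position, so the outcomes alternate
along the chain and `n` is an N-position exactly when `v` is even.
-/

theorem misereP_iff {S D : Finset ℕ} {n : ℕ} :
    misereP S D n ↔
      (iMarkOptions S D n).Nonempty ∧ ∀ m ∈ iMarkOptions S D n, ¬ misereP S D m := by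
  rw [misereP]
  exact and_congr_right fun _ => ⟨fun h m hm => h ⟨m, hm⟩, fun h m => h m.1 m.2⟩

theorem iMarkOptions_zero (S D : Finset ℕ) : iMarkOptions S D 0 = ∅ :=
  Finset.eq_empty_of_forall_notMem fun _ hm => Nat.not_lt_zero _ (iMarkOptions_lt hm)

theorem not_misereP_zero (S D : Finset ℕ) : ¬ misereP S D 0 := by
  rw [misereP_iff, iMarkOptions_zero]
  simp

theorem mem_iMarkOptions_two_of_forall_lt {S : Finset ℕ} {n m : ℕ} (hS : ∀ s ∈ S, n < s) :
    m ∈ iMarkOptions S {2} n ↔ 2 ∣ n ∧ 0 < n ∧ m = n / 2 := by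
  simp only [iMarkOptions, Finset.mem_union, Finset.mem_image, Finset.mem_filter,
    Finset.mem_singleton]
  constructor
  · rintro (⟨s, ⟨hs, -, hsn⟩, -⟩ | ⟨d, ⟨rfl, -, hdvd, hn⟩, rfl⟩)
    · exact absurd hsn (hS s hs).not_ge
    · exact ⟨hdvd, hn, rfl⟩
  · rintro ⟨hdvd, hn, rfl⟩
    exact Or.inr ⟨2, ⟨rfl, le_rfl, hdvd, hn⟩, rfl⟩

theorem misereP_two_of_forall_lt {S : Finset ℕ} {n : ℕ} (hS : ∀ s ∈ S, n < s) :
    misereP S {2} n ↔ 2 ∣ n ∧ 0 < n ∧ ¬ misereP S {2} (n / 2) := by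
  rw [misereP_iff]
  simp only [Finset.Nonempty, mem_iMarkOptions_two_of_forall_lt hS]
  constructor
  · rintro ⟨⟨_, hdvd, hn, rfl⟩, hP⟩
    exact ⟨hdvd, hn, hP _ ⟨hdvd, hn, rfl⟩⟩
  · rintro ⟨hdvd, hn, hP⟩
    exact ⟨⟨_, hdvd, hn, rfl⟩, by rintro _ ⟨-, -, rfl⟩; exact hP⟩

theorem not_misereP_two_iff_even_padicValNat {S : Finset ℕ} {n : ℕ} (hn : 0 < n)
    (hS : ∀ s ∈ S, n < s) : ¬ misereP S {2} n ↔ Even (padicValNat 2 n) := by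
  induction n using Nat.strong_induction_on with
  | _ n ih =>
    rw [misereP_two_of_forall_lt hS]
    obtain ⟨k, rfl | rfl⟩ := Nat.even_or_odd' n
    · have hk : 0 < k := by omega
      have hval : padicValNat 2 (2 * k) = padicValNat 2 k + 1 := by
        rw [padicValNat.mul two_ne_zero hk.ne', padicValNat.self one_lt_two, add_comm]
      have ih_k := ih k (by omega) hk fun s hs => by have := hS s hs; omega
      rw [hval, Nat.even_add_one, ← ih_k, Nat.mul_div_cancel_left k two_pos]
      simp [hn]
    · have hodd : ¬ 2 ∣ 2 * k + 1 := by omega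
      simp [padicValNat.eq_zero_of_not_dvd hodd]

theorem iMiMark_a_2a_small_general (a : ℕ) :
    (∀ n : ℕ, 0 < n → n < a →
      (¬ misereP {a, 2 * a} {2} n ↔ Even (padicValNat 2 n))) ∧
    ¬ misereP {a, 2 * a} {2} 0 := by
  refine ⟨fun n hn hna => not_misereP_two_iff_even_padicValNat hn ?_, not_misereP_zero _ _⟩
  simp only [Finset.mem_insert, Finset.mem_singleton]
  omega

/-- Outcomes of positions below a in the misère game i-MiMark({a,2a},{2}), a odd. -/
theorem iMiMark_a_2a_small (a : ℕ) (ha : 1 ≤ a) (hao : Odd a) :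
    (∀ n : ℕ, 0 < n → n < a →
      (¬ misereP {a, 2 * a} {2} n ↔ Even (padicValNat 2 n))) ∧
    ¬ misereP {a, 2 * a} {2} 0 :=
  iMiMark_a_2a_small_general a
end
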